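/- Suppose the Paving Conjecture holds. Then for every ε > 0 and every bounded operator T on ℓ₂(I) with ‖T e_i‖ = 1 for all i ∈ I, there is a partition {A_j}_{j=1}^r of I (with r depending only on ε and ‖T‖) such that for all j and all square-summable scalars {a_i}_{i∈A_j}: (1-ε) Σ_{i∈A_j} |a_i|² ≤ ‖Σ_{i∈A_j} a_i T e_i‖² ≤ (1+ε) Σ_{i∈A_j} |a_i|². -/

import Mathlib

/- The Paving Conjecture implies that the columns of any norm-one-columns bounded
operator on `ℓ₂(I)` can be partitioned into finitely many `ε`-Riesz basic sequences,
the number of pieces depending only on `ε` and `‖T‖`. -/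

noncomputable section

open scoped ENNReal

/-- Truncation of an `ℓ²` sequence to a set of coordinates. -/
def truncSeq {I : Type*} (A : Set I) (f : lp (fun _ : I => ℂ) 2) : lp (fun _ : I => ℂ) 2 :=
  ⟨A.indicator f, by
    apply memℓp_gen
    refine Summable.of_nonneg_of_le (fun i => by positivity) (fun i => ?_)
      ((lp.memℓp f).summable (by norm_num))
    exact Real.rpow_le_rpow (norm_nonneg _) (norm_indicator_le_norm_self _ _) (by norm_num)⟩

/-- The diagonal projection `Q_A` on `ℓ₂(I)`. -/
def Qop {I : Type*} (A : Set I) : lp (fun _ : I => ℂ) 2 →L[ℂ] lp (fun _ : I => ℂ) 2 :=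
  LinearMap.mkContinuous
    { toFun := truncSeq A
      map_add' := fun f g => lp.ext (funext fun i => by
        by_cases h : i ∈ A <;>
          simp [truncSeq, h, lp.coeFn_add, Set.indicator_of_mem, Set.indicator_of_notMem,
            Set.indicator] <;>
          show _ = A.indicator (⇑f) i + A.indicator (⇑g) i <;> simp [Set.indicator, h])
      map_smul' := fun c f => lp.ext (funext fun i => by
        by_cases h : i ∈ A <;>
          simp [truncSeq, h, lp.coeFn_smul, Set.indicator_of_mem, Set.indicator_of_notMem]) }
    1 (fun f => by
      rw [one_mul]
      refine lp.norm_le_of_tsum_le (p := 2) (by norm_num) (norm_nonneg f) ?_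
      have h1 : ‖f‖ ^ (2 : ℝ≥0∞).toReal = ∑' i, ‖f i‖ ^ (2 : ℝ≥0∞).toReal :=
        lp.norm_rpow_eq_tsum (by norm_num) f
      rw [h1]
      refine Summable.tsum_le_tsum (fun i => ?_) ?_ ((lp.memℓp f).summable (by norm_num))
      · exact Real.rpow_le_rpow (norm_nonneg _) (norm_indicator_le_norm_self _ _) (by norm_num)
      · refine Summable.of_nonneg_of_le (fun i => by positivity) (fun i => ?_)
          ((lp.memℓp f).summable (by norm_num))
        exact Real.rpow_le_rpow (norm_nonneg _) (norm_indicator_le_norm_self _ _) (by norm_num))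

/-! Compressing `S := T† T - 1` to a paving block `A` does not change its quadratic form on vectors
supported in `A`, and that quadratic form is `‖T a‖² - ‖a‖²`. The columns of `T` being unit vectors
says exactly that `S` has zero diagonal, and `‖S‖ ≤ ‖T‖² + 1`, so paving `S` at level
`ε / (‖T‖² + 1)` gives the two-sided Riesz bounds on every block. -/

open scoped lp InnerProductSpace
open ContinuousLinearMap

section AdjointCompSelf

variable {𝕜 E : Type*} [RCLike 𝕜] [NormedAddCommGroup E] [InnerProductSpace 𝕜 E] [CompleteSpace E]

theorem inner_adjoint_comp_self_sub_one_apply_self (T : E →L[𝕜] E) (x : E) :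
    ⟪(adjoint T ∘L T - 1) x, x⟫_𝕜 = ((‖T x‖ ^ 2 - ‖x‖ ^ 2 : ℝ) : 𝕜) := by
  rw [sub_apply, inner_sub_left, comp_apply, adjoint_inner_left, one_apply_eq_self,
    inner_self_eq_norm_sq_to_K, inner_self_eq_norm_sq_to_K]
  push_cast
  rfl

theorem norm_adjoint_comp_self_sub_one_le (T : E →L[𝕜] E) :
    ‖adjoint T ∘L T - 1‖ ≤ ‖T‖ ^ 2 + 1 :=
  calc ‖adjoint T ∘L T - 1‖ ≤ ‖adjoint T ∘L T‖ + ‖(1 : E →L[𝕜] E)‖ := norm_sub_le _ _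
    _ ≤ ‖T‖ ^ 2 + 1 := by
      rw [norm_adjoint_comp_self, ← sq]
      exact add_le_add_right norm_id_le _

end AdjointCompSelf

section DiagonalProjection

variable {I : Type*}

theorem Qop_apply (A : Set I) (f : ℓ²(I, ℂ)) (i : I) : Qop A f i = A.indicator f i := rfl

theorem Qop_apply_eq_self {A : Set I} {a : ℓ²(I, ℂ)} (ha : ∀ i ∉ A, a i = 0) :
    Qop A a = a := by
  ext i
  by_cases hi : i ∈ A
  · rw [Qop_apply, Set.indicator_of_mem hi]
  · rw [Qop_apply, Set.indicator_of_notMem hi, ha i hi]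

theorem inner_Qop_left_of_support {A : Set I} {a : ℓ²(I, ℂ)} (ha : ∀ i ∉ A, a i = 0)
    (f : ℓ²(I, ℂ)) : ⟪Qop A f, a⟫_ℂ = ⟪f, a⟫_ℂ := by
  rw [lp.inner_eq_tsum, lp.inner_eq_tsum]
  congr 1 with i
  by_cases hi : i ∈ A
  · rw [Qop_apply, Set.indicator_of_mem hi]
  · rw [ha i hi, inner_zero_right, inner_zero_right]

theorem norm_inner_apply_self_le_of_support {A : Set I} {a : ℓ²(I, ℂ)} (ha : ∀ i ∉ A, a i = 0)
    (S : ℓ²(I, ℂ) →L[ℂ] ℓ²(I, ℂ)) :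
    ‖⟪S a, a⟫_ℂ‖ ≤ ‖Qop A ∘L S ∘L Qop A‖ * ‖a‖ ^ 2 := by
  have hcompress : ⟪(Qop A ∘L S ∘L Qop A) a, a⟫_ℂ = ⟪S a, a⟫_ℂ := by
    rw [comp_apply, comp_apply, Qop_apply_eq_self ha, inner_Qop_left_of_support ha]
  rw [← hcompress, sq, ← mul_assoc]
  exact (norm_inner_le_norm _ _).trans (by gcongr; exact le_opNorm _ _)

theorem lp.norm_sq_eq_tsum {G : I → Type*} [∀ i, NormedAddCommGroup (G i)] (a : lp G 2) :
    ‖a‖ ^ 2 = ∑' i, ‖a i‖ ^ 2 := by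
  simpa [Real.rpow_two] using lp.norm_rpow_eq_tsum (p := 2) (by norm_num) a

end DiagonalProjection

theorem paving_implies_eps_riesz_decomposition {I : Type*} [DecidableEq I]
    -- the Paving Conjecture for operators on `ℓ₂(I)`
    (pc : ∀ ε : ℝ, 0 < ε → ∃ r : ℕ,
      ∀ S : lp (fun _ : I => ℂ) 2 →L[ℂ] lp (fun _ : I => ℂ) 2,
        (∀ i, (inner ℂ (S (lp.single 2 i 1)) (lp.single 2 i 1) : ℂ) = 0) →
        ∃ A : Fin r → Set I,
          (∀ j k, j ≠ k → Disjoint (A j) (A k)) ∧ (⋃ j, A j) = Set.univ ∧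
          ∀ j, ‖(Qop (A j)).comp (S.comp (Qop (A j)))‖ ≤ ε * ‖S‖) :
    -- conclusion: `ε`-Riesz decomposition, with `r` depending only on `ε` and `‖T‖`
    ∀ ε : ℝ, 0 < ε → ∀ C : ℝ, ∃ r : ℕ,
      ∀ T : lp (fun _ : I => ℂ) 2 →L[ℂ] lp (fun _ : I => ℂ) 2, ‖T‖ = C →
        (∀ i, ‖T (lp.single 2 i 1)‖ = 1) →
        ∃ A : Fin r → Set I,
          (∀ j k, j ≠ k → Disjoint (A j) (A k)) ∧ (⋃ j, A j) = Set.univ ∧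
          ∀ j, ∀ a : lp (fun _ : I => ℂ) 2, (∀ i, i ∉ A j → a i = 0) →
            (1 - ε) * ∑' i, ‖a i‖ ^ 2 ≤ ‖T a‖ ^ 2 ∧
            ‖T a‖ ^ 2 ≤ (1 + ε) * ∑' i, ‖a i‖ ^ 2 := by
  intro ε hε C
  obtain ⟨r, hr⟩ := pc (ε / (C ^ 2 + 1)) (by positivity)
  refine ⟨r, fun T hTC hTcol => ?_⟩
  set S := adjoint T ∘L T - 1
  have hdiag : ∀ i, ⟪S (lp.single 2 i 1), lp.single 2 i 1⟫_ℂ = 0 := fun i => by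
    rw [inner_adjoint_comp_self_sub_one_apply_self, hTcol, lp.norm_single (by norm_num)]
    norm_num
  obtain ⟨A, hdisj, hcover, hpav⟩ := hr S hdiag
  refine ⟨A, hdisj, hcover, fun j a ha => ?_⟩
  have hpav_le : ‖Qop (A j) ∘L S ∘L Qop (A j)‖ ≤ ε := by
    have hS : ‖S‖ ≤ C ^ 2 + 1 := hTC ▸ norm_adjoint_comp_self_sub_one_le T
    calc _ ≤ ε / (C ^ 2 + 1) * ‖S‖ := hpav j
      _ ≤ ε / (C ^ 2 + 1) * (C ^ 2 + 1) := by gcongr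
      _ = ε := div_mul_cancel₀ ε (by positivity)
  have hest := (norm_inner_apply_self_le_of_support ha S).trans
    (mul_le_mul_of_nonneg_right hpav_le (sq_nonneg ‖a‖))
  rw [inner_adjoint_comp_self_sub_one_apply_self, RCLike.norm_ofReal] at hest
  obtain ⟨hlower, hupper⟩ := abs_le.mp hest
  rw [← lp.norm_sq_eq_tsum a]
  constructor <;> linarith
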